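/- Let a_1,...,a_n be pairwise coprime positive integers with a_1 even, and b_1,...,b_n integers with Σ_i b_i·(a_1···a_n)/a_i = 1 and all a_i - b_i odd. Then for every i = 1,...,n: s((a_1···a_n)/a_i, a_i; 1/2, 1/2) + s(a_i - b_i, 2a_i) + s(b_i, a_i) = 0. -/

import Mathlib

/-!
Write `p = a i`, `q = ∏_{j ≠ i} a j` and `b = b i`. Splitting `s(p + q, 2p)` into its even and odd
terms gives `s(p + q, 2p) = s(q, p) + s(q, p; 1/2, 1/2)`. Reindexing `μ ↦ cμ` shows that `s(c, m)`
is unchanged when `c` is replaced by an inverse modulo `m`, so, with `s(-c, m) = -s(c, m)`, the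
identity follows from the two congruences `q b ≡ 1 (mod p)`, read off from
`∑ b_j ∏_{k ≠ j} a_k = 1`, and `(p + q)(b - p) ≡ 1 (mod 2p)`, which also needs parity: `a 0` is the
only even `a j`, hence `b 0` is the only odd `b j`, and when `i = 0` all other terms of the sum are
divisible by `2p`.
-/

open Finset Real

open Classical in
/-- The sawtooth function: 0 on integers, fractional part minus 1/2 otherwise. -/
noncomputable def saw (x : ℝ) : ℝ :=
  if ∃ n : ℤ, x = n then 0 else Int.fract x - 1/2

/-- The Dedekind sum s(q,p). -/
noncomputable def dedekindSum (q : ℤ) (p : ℕ) : ℝ :=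
  ∑ μ ∈ Finset.range p, saw ((μ : ℝ) / p) * saw ((q : ℝ) * μ / p)

/-- The Dedekind–Rademacher sum s(q,p;x,y). -/
noncomputable def drSum (q : ℤ) (p : ℕ) (x y : ℝ) : ℝ :=
  ∑ μ ∈ Finset.range p, saw (((μ : ℝ) + y) / p) * saw ((q : ℝ) * ((μ : ℝ) + y) / p + x)

lemma saw_eq (x : ℝ) : saw x = if Int.fract x = 0 then 0 else Int.fract x - 1/2 := by
  classical exact if_congr (by simp [Int.fract_eq_zero_iff, eq_comm]) rfl rfl

lemma saw_add_intCast (x : ℝ) (k : ℤ) : saw (x + k) = saw x := by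
  simp only [saw_eq, Int.fract_add_intCast]

lemma saw_add_natCast (x : ℝ) (k : ℕ) : saw (x + k) = saw x := by
  exact_mod_cast saw_add_intCast x k

lemma saw_neg (x : ℝ) : saw (-x) = -saw x := by
  by_cases hx : Int.fract x = 0
  · simp [saw_eq, hx, Int.fract_neg_eq_zero]
  · have h1 : 1 - Int.fract x ≠ 0 := sub_ne_zero.mpr (Int.fract_lt_one x).ne'
    simp only [saw_eq, hx, h1, if_false, Int.fract_neg hx]
    ring

lemma saw_intCast_div_eq_val {m : ℕ} [NeZero m] (k : ℤ) :
    saw ((k : ℝ) / m) = saw (((k : ZMod m).val : ℝ) / m) := by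
  have hm : (m : ℝ) ≠ 0 := Nat.cast_ne_zero.mpr (NeZero.ne m)
  have hk : (k : ℝ) / m = ((k : ZMod m).val : ℝ) / m + ((k / m : ℤ) : ℝ) := by
    have h := Int.emod_add_mul_ediv k m
    rw [← ZMod.val_intCast] at h
    rw [div_add' _ _ _ hm]
    congr 1
    exact_mod_cast by linear_combination -h
  rw [hk, saw_add_intCast]

lemma dedekindSum_eq_sum_zmod (c : ℤ) (m : ℕ) [NeZero m] :
    dedekindSum c m = ∑ x : ZMod m, saw (x.val / m) * saw (((c : ZMod m) * x).val / m) := by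
  refine Finset.sum_nbij' (fun μ => (μ : ZMod m)) ZMod.val (by simp) (by simp [ZMod.val_lt])
    (fun μ hμ => ZMod.val_natCast_of_lt (Finset.mem_range.mp hμ)) (fun x _ => by simp) ?_
  intro μ hμ
  rw [ZMod.val_natCast_of_lt (Finset.mem_range.mp hμ)]
  congr 1
  rw [show (c : ℝ) * μ = ((c * μ : ℤ) : ℝ) by push_cast; ring, saw_intCast_div_eq_val]
  push_cast
  rfl

lemma dedekindSum_eq_of_mul_modEq_one {c c' : ℤ} {m : ℕ} (h : c * c' ≡ 1 [ZMOD m]) :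
    dedekindSum c m = dedekindSum c' m := by
  rcases eq_or_ne m 0 with rfl | hm
  · simp [dedekindSum]
  have : NeZero m := ⟨hm⟩
  have hcc' : (c : ZMod m) * c' = 1 := by exact_mod_cast (ZMod.intCast_eq_intCast_iff _ _ _).mpr h
  rw [dedekindSum_eq_sum_zmod, dedekindSum_eq_sum_zmod]
  refine Fintype.sum_bijective (fun x => (c : ZMod m) * x) ?_ _ _ fun x => ?_
  · exact (Units.mkOfMulEqOne _ _ hcc').mulLeft_bijective
  · rw [← mul_assoc, mul_comm (c' : ZMod m), hcc', one_mul, mul_comm]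

lemma dedekindSum_neg (c : ℤ) (m : ℕ) : dedekindSum (-c) m = -dedekindSum c m := by
  simp only [dedekindSum, ← Finset.sum_neg_distrib, Int.cast_neg, neg_mul, neg_div, saw_neg,
    mul_neg]

lemma sum_range_two_mul {M : Type*} [AddCommMonoid M] (p : ℕ) (f : ℕ → M) :
    ∑ μ ∈ range (2 * p), f μ = ∑ ν ∈ range p, f (2 * ν) + ∑ ν ∈ range p, f (2 * ν + 1) := by
  induction p with
  | zero => simp
  | succ p ih =>
    rw [show 2 * (p + 1) = 2 * p + 1 + 1 by ring, sum_range_succ, sum_range_succ, ih,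
      sum_range_succ, sum_range_succ]
    abel

lemma dedekindSum_add_two_mul (c : ℤ) (p : ℕ) :
    dedekindSum (p + c) (2 * p) = dedekindSum c p + drSum c p (1/2) (1/2) := by
  rcases eq_or_ne p 0 with rfl | hp
  · simp [dedekindSum, drSum]
  have hp' : (p : ℝ) ≠ 0 := by exact_mod_cast hp
  rw [dedekindSum, sum_range_two_mul]
  congr 1 <;> refine sum_congr rfl fun ν _ => ?_
  · have h1 : ((2 * ν : ℕ) : ℝ) / ((2 * p : ℕ) : ℝ) = ν / p := by push_cast; field_simp
    have h2 : ((p + c : ℤ) : ℝ) * ((2 * ν : ℕ) : ℝ) / ((2 * p : ℕ) : ℝ) = c * ν / p + ν := by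
      push_cast; field_simp; ring
    rw [h1, h2, saw_add_natCast]
  · have h1 : ((2 * ν + 1 : ℕ) : ℝ) / ((2 * p : ℕ) : ℝ) = (ν + 1/2) / p := by
      push_cast; field_simp
    have h2 : ((p + c : ℤ) : ℝ) * ((2 * ν + 1 : ℕ) : ℝ) / ((2 * p : ℕ) : ℝ)
        = c * (ν + 1/2) / p + 1/2 + ν := by
      push_cast; field_simp; ring
    rw [h1, h2, saw_add_natCast]

lemma mul_prod_erase_modEq_one {ι : Type*} [Fintype ι] [DecidableEq ι] {a b : ι → ℤ}
    (hsum : ∑ i, b i * ∏ j ∈ univ.erase i, a j = 1) {i : ι} {d : ℤ} (hd : ∀ j ≠ i, d ∣ b j) :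
    b i * ∏ j ∈ univ.erase i, a j ≡ 1 [ZMOD d * a i] := by
  rw [Int.modEq_iff_dvd, ← hsum, ← add_sum_erase univ _ (mem_univ i), add_sub_cancel_left]
  refine dvd_sum fun j hj => mul_dvd_mul (hd j (ne_of_mem_erase hj)) (dvd_prod_of_mem _ ?_)
  exact mem_erase.mpr ⟨(ne_of_mem_erase hj).symm, mem_univ i⟩

lemma add_mul_sub_modEq_one_of_even {p q b : ℤ} (hp : Even p) (hq : Odd q) (hb : Odd b)
    (h : b * q ≡ 1 [ZMOD 2 * p]) : (p + q) * (b - p) ≡ 1 [ZMOD 2 * p] := by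
  obtain ⟨k, hk⟩ := (hb.sub_odd hq).sub hp
  rw [show (p + q) * (b - p) = b * q + 2 * p * k by linear_combination p * hk]
  exact Int.modEq_add_fac_self.trans h

lemma add_mul_sub_modEq_one_of_odd {p q b : ℤ} (hp : Odd p) (hq : Even q) (hb : Even b)
    (h : b * q ≡ 1 [ZMOD p]) : (p + q) * (b - p) ≡ 1 [ZMOD 2 * p] := by
  have hcop : (2 : ℤ).natAbs.Coprime p.natAbs := Nat.coprime_two_left.mpr (Int.natAbs_odd.mpr hp)
  refine (Int.modEq_and_modEq_iff_modEq_mul hcop).mp ⟨?_, ?_⟩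
  · exact Int.odd_iff.mp ((hp.add_even hq).mul (hb.sub_odd hp))
  · rw [show (p + q) * (b - p) = b * q + p * (b - q - p) by ring]
    exact Int.modEq_add_fac_self.trans h

lemma add_prod_erase_mul_sub_modEq_one {ι : Type*} [Fintype ι] [DecidableEq ι] {a : ι → ℕ}
    {b : ι → ℤ} {i₀ : ι} (heven : Even (a i₀)) (hcop : ∀ i j, i ≠ j → Nat.Coprime (a i) (a j))
    (hsum : ∑ i, b i * ∏ j ∈ univ.erase i, (a j : ℤ) = 1) (hodddiff : ∀ i, Odd ((a i : ℤ) - b i))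
    (i : ι) : ((a i : ℤ) + ∏ j ∈ univ.erase i, (a j : ℤ)) * (b i - a i) ≡ 1 [ZMOD 2 * a i] := by
  have hodd : ∀ j ≠ i₀, Odd (a j : ℤ) := fun j hj =>
    ((Nat.Coprime.coprime_dvd_left heven.two_dvd (hcop i₀ j hj.symm)).odd_of_left).natCast
  rcases eq_or_ne i i₀ with rfl | hi
  · have ha : Even (a i : ℤ) := heven.natCast
    have hq : Odd (∏ j ∈ univ.erase i, (a j : ℤ)) :=
      prod_induction _ Odd (fun _ _ => Odd.mul) odd_one fun j hj => hodd j (ne_of_mem_erase hj)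
    have hb : ∀ j ≠ i, (2 : ℤ) ∣ b j := fun j hj =>
      ((Int.odd_sub.mp (hodddiff j)).mp (hodd j hj)).two_dvd
    exact add_mul_sub_modEq_one_of_even ha hq ((Int.odd_sub'.mp (hodddiff i)).mpr ha)
      (mul_prod_erase_modEq_one hsum hb)
  · have hq : Even (∏ j ∈ univ.erase i, (a j : ℤ)) := even_iff_two_dvd.mpr <|
      (heven.natCast (α := ℤ)).two_dvd.trans
        (dvd_prod_of_mem (fun j => (a j : ℤ)) (mem_erase.mpr ⟨Ne.symm hi, mem_univ i₀⟩))
    refine add_mul_sub_modEq_one_of_odd (hodd i hi) hq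
      ((Int.odd_sub.mp (hodddiff i)).mp (hodd i hi)) ?_
    simpa using mul_prod_erase_modEq_one hsum (d := 1) fun _ _ => one_dvd _

theorem even_case_key_identity_general (n : ℕ) (a : Fin (n+1) → ℕ) (b : Fin (n+1) → ℤ)
    (heven : Even (a 0))
    (hcop : ∀ i j, i ≠ j → Nat.Coprime (a i) (a j))
    (hsum : ∑ i, b i * ∏ j ∈ Finset.univ.erase i, (a j : ℤ) = 1)
    (hodddiff : ∀ i, Odd ((a i : ℤ) - b i)) :
    ∀ i, drSum (∏ j ∈ Finset.univ.erase i, (a j : ℤ)) (a i) (1/2) (1/2)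
      + dedekindSum ((a i : ℤ) - b i) (2 * a i)
      + dedekindSum (b i) (a i) = 0 := by
  intro i
  set q := ∏ j ∈ univ.erase i, (a j : ℤ)
  have hbq : q * b i ≡ 1 [ZMOD a i] := by
    simpa [mul_comm] using mul_prod_erase_modEq_one hsum (d := 1) fun _ _ => one_dvd _
  have hkey : ((a i : ℤ) + q) * (b i - a i) ≡ 1 [ZMOD (2 * a i : ℕ)] := by
    push_cast
    exact add_prod_erase_mul_sub_modEq_one heven hcop hsum hodddiff i
  have hsplit := dedekindSum_add_two_mul q (a i)
  rw [dedekindSum_eq_of_mul_modEq_one hkey, ← neg_sub, dedekindSum_neg,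
    dedekindSum_eq_of_mul_modEq_one hbq] at hsplit
  linarith

theorem even_case_key_identity (n : ℕ) (a : Fin (n+1) → ℕ) (b : Fin (n+1) → ℤ)
    (hpos : ∀ i, 0 < a i) (heven : Even (a 0))
    (hcop : ∀ i j, i ≠ j → Nat.Coprime (a i) (a j))
    (hsum : ∑ i, b i * ∏ j ∈ Finset.univ.erase i, (a j : ℤ) = 1)
    (hodddiff : ∀ i, Odd ((a i : ℤ) - b i)) :
    ∀ i, drSum (∏ j ∈ Finset.univ.erase i, (a j : ℤ)) (a i) (1/2) (1/2)
      + dedekindSum ((a i : ℤ) - b i) (2 * a i)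
      + dedekindSum (b i) (a i) = 0 :=
  even_case_key_identity_general n a b heven hcop hsum hodddiff
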